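/- arXiv:1706.04923 — 2 statements merged into one kernel-verified Lean document; each statement's English description precedes it below -/
import Mathlib

section
/- Let M be a finite free ℤ-module with an alternating ℤ-bilinear form ⟨·,·⟩, and let v₁, v₂, v₃, v₄ ∈ M satisfy ⟨v₁,v₂⟩ = 0, ⟨v₁,v₃⟩ = 0, |⟨v₁,v₄⟩| = 1, |⟨v₂,v₃⟩| = 1, |⟨v₂,v₄⟩| = 1, |⟨v₃,v₄⟩| = 1. Then the squares T_{v₁+v₂}², T_{v₁−v₂}², T_{v₁+v₃}², T_{v₁−v₃}² all belong to the subgroup of ℤ-linear automorphisms of M generated by T_{v₁}, T_{v₂}, T_{v₃}, T_{v₄}. -/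
/-- The symplectic transvection along `v` for the alternating bilinear form `B`:
`u ↦ u + ⟨v, u⟩ • v`, with inverse `u ↦ u - ⟨v, u⟩ • v`. -/
def symplecticTransvection {M : Type*} [AddCommGroup M]
    (B : M →ₗ[ℤ] M →ₗ[ℤ] ℤ) (hB : ∀ x, B x x = 0) (v : M) : M ≃ₗ[ℤ] M where
  toFun u := u + B v u • v
  invFun u := u - B v u • v
  map_add' u w := by
    show (u + w) + B v (u + w) • v = (u + B v u • v) + (w + B v w • v)
    rw [map_add, add_smul]; abel
  map_smul' c u := by
    show c • u + B v (c • u) • v = c • (u + B v u • v)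
    rw [LinearMap.map_smul, smul_assoc, smul_add]
  left_inv u := by
    show (u + B v u • v) - B v (u + B v u • v) • v = u
    rw [map_add, LinearMap.map_smul, hB, smul_zero, add_zero, add_sub_cancel_right]
  right_inv u := by
    show (u - B v u • v) + B v (u - B v u • v) • v = u
    rw [map_sub, LinearMap.map_smul, hB, smul_zero, sub_zero, sub_add_cancel]

section aux
variable {M : Type*} [AddCommGroup M] (B : M →ₗ[ℤ] M →ₗ[ℤ] ℤ) (hB : ∀ x, B x x = 0)

lemma mul_app (e₁ e₂ : M ≃ₗ[ℤ] M) (x : M) : (e₁ * e₂) x = e₁ (e₂ x) := rfl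

lemma sT_apply (v u : M) : symplecticTransvection B hB v u = u + B v u • v := rfl

lemma sT_inv_apply (v u : M) : (symplecticTransvection B hB v)⁻¹ u = u - B v u • v := rfl

lemma sT_neg (v : M) : symplecticTransvection B hB (-v) = symplecticTransvection B hB v := by
  ext u
  simp [sT_apply]

lemma skew (hB : ∀ x, B x x = 0) (x y : M) : B y x = - B x y := by
  have h := hB (x + y)
  simp only [map_add, LinearMap.add_apply, hB x, hB y] at h
  linarith

lemma word_plus (a b d : M) (hab : B a b = 0) (had : B a d = 1) (hbd : B b d = 1) :
    (symplecticTransvection B hB (a + b)) ^ 2 =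
      symplecticTransvection B hB a * symplecticTransvection B hB a *
      symplecticTransvection B hB b * symplecticTransvection B hB b *
      (symplecticTransvection B hB d)⁻¹ * (symplecticTransvection B hB a)⁻¹ *
      (symplecticTransvection B hB b)⁻¹ * (symplecticTransvection B hB d)⁻¹ *
      (symplecticTransvection B hB d)⁻¹ * (symplecticTransvection B hB b)⁻¹ *
      (symplecticTransvection B hB a)⁻¹ * (symplecticTransvection B hB d)⁻¹ := by
  have hba : B b a = 0 := by rw [skew B hB, hab, neg_zero]
  have hda : B d a = -1 := by rw [skew B hB, had]
  have hdb : B d b = -1 := by rw [skew B hB, hbd]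
  ext u
  simp only [pow_two, mul_app, sT_apply, sT_inv_apply, map_add, map_sub,
    LinearMap.add_apply, map_smul, smul_eq_mul, hab, hba, had, hda, hbd, hdb,
    hB a, hB b, hB d]
  module

lemma word_minus (a b d : M) (hab : B a b = 0) (had : B a d = 1) (hbd : B b d = 1) :
    (symplecticTransvection B hB (a - b)) ^ 2 =
      symplecticTransvection B hB a * symplecticTransvection B hB a *
      symplecticTransvection B hB b * symplecticTransvection B hB b *
      symplecticTransvection B hB d * symplecticTransvection B hB a *
      symplecticTransvection B hB b * symplecticTransvection B hB d *
      symplecticTransvection B hB d * symplecticTransvection B hB b *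
      symplecticTransvection B hB a * symplecticTransvection B hB d := by
  have hba : B b a = 0 := by rw [skew B hB, hab, neg_zero]
  have hda : B d a = -1 := by rw [skew B hB, had]
  have hdb : B d b = -1 := by rw [skew B hB, hbd]
  ext u
  simp only [pow_two, mul_app, sT_apply, sT_inv_apply, map_add, map_sub,
    LinearMap.add_apply, LinearMap.sub_apply, map_smul, smul_eq_mul, hab, hba, had, hda, hbd, hdb,
    hB a, hB b, hB d]
  module

lemma pair_mem (S : Set (M ≃ₗ[ℤ] M)) (a b d : M)
    (hab : B a b = 0) (had : B a d = 1) (hbd : B b d = 1)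
    (haS : symplecticTransvection B hB a ∈ S) (hbS : symplecticTransvection B hB b ∈ S)
    (hdS : symplecticTransvection B hB d ∈ S) :
    (symplecticTransvection B hB (a + b)) ^ 2 ∈ Subgroup.closure S ∧
    (symplecticTransvection B hB (a - b)) ^ 2 ∈ Subgroup.closure S := by
  have ha := Subgroup.subset_closure haS
  have hb := Subgroup.subset_closure hbS
  have hd := Subgroup.subset_closure hdS
  constructor
  · rw [word_plus B hB a b d hab had hbd]
    exact mul_mem (mul_mem (mul_mem (mul_mem (mul_mem (mul_mem (mul_mem (mul_mem (mul_mem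
      (mul_mem (mul_mem ha ha) hb) hb) (inv_mem hd)) (inv_mem ha)) (inv_mem hb)) (inv_mem hd))
      (inv_mem hd)) (inv_mem hb)) (inv_mem ha)) (inv_mem hd)
  · rw [word_minus B hB a b d hab had hbd]
    exact mul_mem (mul_mem (mul_mem (mul_mem (mul_mem (mul_mem (mul_mem (mul_mem (mul_mem
      (mul_mem (mul_mem ha ha) hb) hb) hd) ha) hb) hd) hd) hb) ha) hd

end aux

/-- Corollary 2.5 of the paper (signs of the intersections do not matter). -/
theorem statement2 {M : Type*} [AddCommGroup M] [Module.Free ℤ M] [Module.Finite ℤ M]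
    (B : M →ₗ[ℤ] M →ₗ[ℤ] ℤ) (hB : ∀ x, B x x = 0) (v₁ v₂ v₃ v₄ : M)
    (h12 : B v₁ v₂ = 0) (h13 : B v₁ v₃ = 0) (h14 : |B v₁ v₄| = 1)
    (h23 : |B v₂ v₃| = 1) (h24 : |B v₂ v₄| = 1) (h34 : |B v₃ v₄| = 1) :
    (symplecticTransvection B hB (v₁ + v₂)) ^ 2 ∈
      Subgroup.closure {symplecticTransvection B hB v₁, symplecticTransvection B hB v₂,
        symplecticTransvection B hB v₃, symplecticTransvection B hB v₄} ∧
    (symplecticTransvection B hB (v₁ - v₂)) ^ 2 ∈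
      Subgroup.closure {symplecticTransvection B hB v₁, symplecticTransvection B hB v₂,
        symplecticTransvection B hB v₃, symplecticTransvection B hB v₄} ∧
    (symplecticTransvection B hB (v₁ + v₃)) ^ 2 ∈
      Subgroup.closure {symplecticTransvection B hB v₁, symplecticTransvection B hB v₂,
        symplecticTransvection B hB v₃, symplecticTransvection B hB v₄} ∧
    (symplecticTransvection B hB (v₁ - v₃)) ^ 2 ∈
      Subgroup.closure {symplecticTransvection B hB v₁, symplecticTransvection B hB v₂,
        symplecticTransvection B hB v₃, symplecticTransvection B hB v₄} := by
  have habs : ∀ x : ℤ, |x| = 1 → x = 1 ∨ x = -1 := fun x h => (abs_eq (by norm_num)).mp h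
  obtain ⟨d, hTd, had, h2d, h3d⟩ : ∃ d, symplecticTransvection B hB d =
      symplecticTransvection B hB v₄ ∧ B v₁ d = 1 ∧ |B v₂ d| = 1 ∧ |B v₃ d| = 1 := by
    rcases habs _ h14 with h | h
    · exact ⟨v₄, rfl, h, h24, h34⟩
    · exact ⟨-v₄, sT_neg B hB v₄, by simp [h], by simpa using h24, by simpa using h34⟩
  obtain ⟨b, hTb, hab, hbd, hswap⟩ : ∃ b, symplecticTransvection B hB b =
      symplecticTransvection B hB v₂ ∧ B v₁ b = 0 ∧ B b d = 1 ∧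
      ((v₁ + v₂ = v₁ + b ∧ v₁ - v₂ = v₁ - b) ∨ (v₁ + v₂ = v₁ - b ∧ v₁ - v₂ = v₁ + b)) := by
    rcases habs _ h2d with h | h
    · exact ⟨v₂, rfl, h12, h, Or.inl ⟨rfl, rfl⟩⟩
    · exact ⟨-v₂, sT_neg B hB v₂, by simp [h12], by simp [h], Or.inr ⟨by abel, by abel⟩⟩
  obtain ⟨c, hTc, hac, hcd, hswap'⟩ : ∃ c, symplecticTransvection B hB c =
      symplecticTransvection B hB v₃ ∧ B v₁ c = 0 ∧ B c d = 1 ∧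
      ((v₁ + v₃ = v₁ + c ∧ v₁ - v₃ = v₁ - c) ∨ (v₁ + v₃ = v₁ - c ∧ v₁ - v₃ = v₁ + c)) := by
    rcases habs _ h3d with h | h
    · exact ⟨v₃, rfl, h13, h, Or.inl ⟨rfl, rfl⟩⟩
    · exact ⟨-v₃, sT_neg B hB v₃, by simp [h13], by simp [h], Or.inr ⟨by abel, by abel⟩⟩
  obtain ⟨m1, m2⟩ := pair_mem B hB ({symplecticTransvection B hB v₁, symplecticTransvection B hB v₂, symplecticTransvection B hB v₃, symplecticTransvection B hB v₄} : Set (M ≃ₗ[ℤ] M)) v₁ b d hab had hbd (by simp) (by rw [hTb]; simp)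
    (by rw [hTd]; simp)
  obtain ⟨m3, m4⟩ := pair_mem B hB ({symplecticTransvection B hB v₁, symplecticTransvection B hB v₂, symplecticTransvection B hB v₃, symplecticTransvection B hB v₄} : Set (M ≃ₗ[ℤ] M)) v₁ c d hac had hcd (by simp) (by rw [hTc]; simp)
    (by rw [hTd]; simp)
  refine ⟨?_, ?_, ?_, ?_⟩
  · rcases hswap with ⟨e, _⟩ | ⟨e, _⟩ <;> rw [e]
    exacts [m1, m2]
  · rcases hswap with ⟨_, e⟩ | ⟨_, e⟩ <;> rw [e]
    exacts [m2, m1]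
  · rcases hswap' with ⟨e, _⟩ | ⟨e, _⟩ <;> rw [e]
    exacts [m3, m4]
  · rcases hswap' with ⟨_, e⟩ | ⟨_, e⟩ <;> rw [e]
    exacts [m4, m3]
end

section
/- For every g ≥ 4, the following 2g vectors form a symplectic basis of (ℤ^A, ⟨·,·⟩) for the form Ω of the permutation σ^{(g)}: the pair (e_2 − e_5 + e_6, e_3 − e_5 + e_6), the pairs (e_{3k+2}, e_{3k+3}) for 1 ≤ k ≤ g−2, and the pair (v*, w*), where v* = e_0 + Σ_{k=0}^{g−2}(−e_{3k+2} + e_{3k+3}) and w* = e_1 + Σ_{k=0}^{g−2}(−e_{3k+2} + e_{3k+3}). That is, these 2g vectors are a ℤ-basis of ℤ^A, within each listed pair the first vector pairs with the second to ⟨·,·⟩-value 1, and any two vectors taken from two distinct pairs pair to 0. -/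
open Matrix

def Aset (g : ℕ) : Finset ℕ :=
  {0, 1} ∪ (Finset.range (g - 1)).biUnion (fun k => {3 * k + 2, 3 * k + 3})

abbrev Idx (g : ℕ) := ↥(Aset g)

def evec (g : ℕ) (m : ℕ) : Idx g → ℤ := fun a => if (a : ℕ) = m then 1 else 0

def pbtau (g : ℕ) (n : ℕ) : ℕ :=
  if n = 0 then 2 * g
  else if n = 1 then 2 * g - 1
  else if n % 3 = 0 then 2 * (n / 3) - 1
  else 2 * ((n - 2) / 3) + 2

def Om (g : ℕ) (pb : ℕ → ℕ) : Matrix (Idx g) (Idx g) ℤ := fun a b =>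
  if (a : ℕ) < (b : ℕ) ∧ pb (b : ℕ) < pb (a : ℕ) then 1
  else if (b : ℕ) < (a : ℕ) ∧ pb (a : ℕ) < pb (b : ℕ) then -1
  else 0

lemma Om_skew (g : ℕ) (pb : ℕ → ℕ) : (Om g pb)ᵀ = -(Om g pb) := by
  ext a b
  simp only [Matrix.transpose_apply, Matrix.neg_apply, Om]
  split_ifs <;> omega

def pairing {g : ℕ} (Ω : Matrix (Idx g) (Idx g) ℤ) (u v : Idx g → ℤ) : ℤ :=
  u ⬝ᵥ Ω.mulVec v

lemma pairing_add {g : ℕ} (Ω : Matrix (Idx g) (Idx g) ℤ) (v u w : Idx g → ℤ) :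
    pairing Ω v (u + w) = pairing Ω v u + pairing Ω v w := by
  unfold pairing; rw [Matrix.mulVec_add, dotProduct_add]

lemma pairing_sub {g : ℕ} (Ω : Matrix (Idx g) (Idx g) ℤ) (v u w : Idx g → ℤ) :
    pairing Ω v (u - w) = pairing Ω v u - pairing Ω v w := by
  unfold pairing; rw [Matrix.mulVec_sub, dotProduct_sub]

lemma pairing_smul {g : ℕ} (Ω : Matrix (Idx g) (Idx g) ℤ) (v : Idx g → ℤ) (c : ℤ)
    (u : Idx g → ℤ) : pairing Ω v (c • u) = c * pairing Ω v u := by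
  unfold pairing; rw [Matrix.mulVec_smul, dotProduct_smul, smul_eq_mul]

lemma pairing_self_zero {g : ℕ} (Ω : Matrix (Idx g) (Idx g) ℤ) (hΩ : Ωᵀ = -Ω)
    (v : Idx g → ℤ) : pairing Ω v v = 0 := by
  have key : pairing Ω v v = -pairing Ω v v := by
    calc pairing Ω v v = ∑ a, ∑ b, v a * (Ω a b * v b) := by
          simp [pairing, dotProduct, Matrix.mulVec, Finset.mul_sum]
    _ = ∑ a, ∑ b, -(v b * (Ω b a * v a)) := by
          refine Finset.sum_congr rfl fun a _ => Finset.sum_congr rfl fun b _ => ?_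
          have h : Ω a b = -Ω b a := by
            have := congrFun (congrFun hΩ.symm a) b
            simp only [Matrix.transpose_apply, Matrix.neg_apply] at this
            omega
          rw [h]; ring
    _ = -∑ b, ∑ a, v b * (Ω b a * v a) := by
          rw [Finset.sum_comm]
          simp
    _ = -pairing Ω v v := by
          simp [pairing, dotProduct, Matrix.mulVec, Finset.mul_sum]
  omega

def transvection {g : ℕ} (Ω : Matrix (Idx g) (Idx g) ℤ) (hΩ : Ωᵀ = -Ω) (v : Idx g → ℤ) :
    (Idx g → ℤ) ≃ₗ[ℤ] (Idx g → ℤ) where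
  toFun u := u + pairing Ω v u • v
  invFun u := u - pairing Ω v u • v
  map_add' u w := by
    show (u + w) + pairing Ω v (u + w) • v = (u + pairing Ω v u • v) + (w + pairing Ω v w • v)
    rw [pairing_add, add_smul]; abel
  map_smul' c u := by
    show c • u + pairing Ω v (c • u) • v = c • (u + pairing Ω v u • v)
    rw [pairing_smul, mul_smul, smul_add]
  left_inv u := by
    show (u + pairing Ω v u • v) - pairing Ω v (u + pairing Ω v u • v) • v = u
    rw [pairing_add, pairing_smul, pairing_self_zero Ω hΩ, mul_zero, add_zero,
      add_sub_cancel_right]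
  right_inv u := by
    show (u - pairing Ω v u • v) + pairing Ω v (u - pairing Ω v u • v) • v = u
    rw [pairing_sub, pairing_smul, pairing_self_zero Ω hΩ, mul_zero, sub_zero,
      sub_add_cancel]

inductive OmegaClosure {M : Type*} [AddCommGroup M] (pair : M → M → ℤ) (V : Set M) : M → Prop
  | base {v : M} : v ∈ V → OmegaClosure pair V v
  | neg {v : M} : OmegaClosure pair V v → OmegaClosure pair V (-v)
  | add {v w : M} : OmegaClosure pair V v → OmegaClosure pair V w → pair v w = 1 →
      OmegaClosure pair V (v + w)
  | sub {v w : M} : OmegaClosure pair V v → OmegaClosure pair V w → pair v w = 1 →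
      OmegaClosure pair V (v - w)

/-- The bottom bijection of Zorich's permutation `σ^{(g)}`. -/
def pbsigma (g : ℕ) (n : ℕ) : ℕ :=
  if n = 0 then 2 * g
  else if n = 1 then 2 * g - 1
  else if n = 2 then 4
  else if n = 3 then 3
  else if n = 5 then 2
  else if n = 6 then 1
  else if n % 3 = 0 then 2 * (n / 3) - 1
  else 2 * ((n - 2) / 3) + 2

/-- The alternating form of Zorich's permutation `σ^{(g)}`
(top row `0 1 2 3 5 6 … 3g-4 3g-3`, bottom row `6 5 3 2 9 8 … 3g-3 3g-4 1 0`). -/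
def OmSigma (g : ℕ) : Matrix (Idx g) (Idx g) ℤ := Om g (pbsigma g)

lemma OmSigma_skew (g : ℕ) : (OmSigma g)ᵀ = -(OmSigma g) := Om_skew g (pbsigma g)

/-- `v* = e_0 + Σ_{k=0}^{g-2} (-e_{3k+2} + e_{3k+3})`. -/
def vstar (g : ℕ) : Idx g → ℤ :=
  evec g 0 + ∑ k ∈ Finset.range (g - 1), (-evec g (3 * k + 2) + evec g (3 * k + 3))

/-- `w* = e_1 + Σ_{k=0}^{g-2} (-e_{3k+2} + e_{3k+3})`. -/
def wstar (g : ℕ) : Idx g → ℤ :=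
  evec g 1 + ∑ k ∈ Finset.range (g - 1), (-evec g (3 * k + 2) + evec g (3 * k + 3))

/-- The symplectic basis of Lemma 3.8: the pair `(e_2 - e_5 + e_6, e_3 - e_5 + e_6)`
(index `i = 0`), the pairs `(e_{3k+2}, e_{3k+3})` for `1 ≤ k ≤ g-2`, and the pair
`(v*, w*)` (index `i = g-1`). -/
def famsigma (g : ℕ) (p : Fin g × Fin 2) : Idx g → ℤ :=
  if (p.1 : ℕ) = 0 then
    (if p.2 = 0 then evec g 2 - evec g 5 + evec g 6 else evec g 3 - evec g 5 + evec g 6)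
  else if (p.1 : ℕ) < g - 1 then
    (if p.2 = 0 then evec g (3 * (p.1 : ℕ) + 2) else evec g (3 * (p.1 : ℕ) + 3))
  else (if p.2 = 0 then vstar g else wstar g)

section Lems
variable (g : ℕ)

lemma mem2 {k : ℕ} (hk : k < g - 1) : 3 * k + 2 ∈ Aset g :=
  Finset.mem_union_right _ (Finset.mem_biUnion.mpr ⟨k, Finset.mem_range.mpr hk, by simp⟩)

lemma mem3 {k : ℕ} (hk : k < g - 1) : 3 * k + 3 ∈ Aset g :=
  Finset.mem_union_right _ (Finset.mem_biUnion.mpr ⟨k, Finset.mem_range.mpr hk, by simp⟩)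

lemma mem0 : (0 : ℕ) ∈ Aset g := Finset.mem_union_left _ (by simp)
lemma mem1 : (1 : ℕ) ∈ Aset g := Finset.mem_union_left _ (by simp)

lemma memA_iff {m : ℕ} : m ∈ Aset g ↔
    m = 0 ∨ m = 1 ∨ ∃ j, j < g - 1 ∧ (m = 3 * j + 2 ∨ m = 3 * j + 3) := by
  simp [Aset, Finset.mem_union, Finset.mem_biUnion, Finset.mem_insert, Finset.mem_range]


lemma pb2eq (k : ℕ) : pbsigma g (3 * k + 2) =
    if k = 0 then 4 else if k = 1 then 2 else 2 * k + 2 := by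
  unfold pbsigma; split_ifs <;> (try exact (‹False›).elim) <;> omega

lemma pb3eq (k : ℕ) : pbsigma g (3 * k + 3) =
    if k = 0 then 3 else if k = 1 then 1 else 2 * k + 1 := by
  unfold pbsigma; split_ifs <;> (try exact (‹False›).elim) <;> omega

lemma pb0 : pbsigma g 0 = 2 * g := rfl
lemma pb1 : pbsigma g 1 = 2 * g - 1 := rfl

lemma pairing_single {pb : ℕ → ℕ} {m n : ℕ} (hm : m ∈ Aset g) (hn : n ∈ Aset g) :
    pairing (Om g pb) (evec g m) (evec g n) = Om g pb ⟨m, hm⟩ ⟨n, hn⟩ := by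
  have h1 : ∀ a : Idx g, (Om g pb).mulVec (evec g n) a = Om g pb a ⟨n, hn⟩ := by
    intro a
    unfold Matrix.mulVec dotProduct evec
    rw [Finset.sum_eq_single (⟨n, hn⟩ : Idx g)]
    · simp
    · intro b _ hb
      simp [show (b : ℕ) ≠ n from fun h => hb (Subtype.ext h)]
    · simp
  unfold pairing dotProduct
  simp only [h1]
  unfold evec
  rw [Finset.sum_eq_single (⟨m, hm⟩ : Idx g)]
  · simp
  · intro b _ hb
    simp [show (b : ℕ) ≠ m from fun h => hb (Subtype.ext h)]
  · simp

lemma Eval {m n : ℕ} (hm : m ∈ Aset g) (hn : n ∈ Aset g) :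
    pairing (OmSigma g) (evec g m) (evec g n) =
      if m < n ∧ pbsigma g n < pbsigma g m then 1
      else if n < m ∧ pbsigma g m < pbsigma g n then -1 else 0 := by
  rw [OmSigma, pairing_single g hm hn]; rfl

end Lems
section Lems2
variable (g : ℕ)

lemma pairing_zero_right (Ω : Matrix (Idx g) (Idx g) ℤ) (v : Idx g → ℤ) :
    pairing Ω v 0 = 0 := by
  unfold pairing; rw [Matrix.mulVec_zero, dotProduct_zero]

lemma pairing_add_left (Ω : Matrix (Idx g) (Idx g) ℤ) (u w v : Idx g → ℤ) :
    pairing Ω (u + w) v = pairing Ω u v + pairing Ω w v := by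
  unfold pairing; rw [add_dotProduct]

lemma pairing_sub_left (Ω : Matrix (Idx g) (Idx g) ℤ) (u w v : Idx g → ℤ) :
    pairing Ω (u - w) v = pairing Ω u v - pairing Ω w v := by
  unfold pairing; rw [sub_dotProduct]

lemma pairing_sum_right (Ω : Matrix (Idx g) (Idx g) ℤ) (v : Idx g → ℤ)
    {ι : Type*} (s : Finset ι) (f : ι → (Idx g → ℤ)) :
    pairing Ω v (∑ k ∈ s, f k) = ∑ k ∈ s, pairing Ω v (f k) := by
  classical
  induction s using Finset.induction_on with
  | empty => simp [pairing_zero_right]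
  | insert _ _ h ih => rw [Finset.sum_insert h, pairing_add, ih, Finset.sum_insert h]

lemma pairing_swap {Ω : Matrix (Idx g) (Idx g) ℤ} (hΩ : Ωᵀ = -Ω) (u v : Idx g → ℤ) :
    pairing Ω u v = -pairing Ω v u := by
  unfold pairing
  rw [Matrix.dotProduct_mulVec, ← Matrix.mulVec_transpose, hΩ, Matrix.neg_mulVec,
    neg_dotProduct, dotProduct_comm]

/-- `u_k = -e_{3k+2} + e_{3k+3}`. -/
def uu (k : ℕ) : Idx g → ℤ := -evec g (3 * k + 2) + evec g (3 * k + 3)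

lemma uu_eq (k : ℕ) : uu g k = evec g (3 * k + 3) - evec g (3 * k + 2) := by
  funext a; simp [uu, sub_eq_neg_add]

/-- `S = Σ u_k`. -/
def SS : Idx g → ℤ := ∑ k ∈ Finset.range (g - 1), uu g k

lemma vstar_eq : vstar g = evec g 0 + SS g := rfl
lemma wstar_eq : wstar g = evec g 1 + SS g := rfl

lemma P_e_uu (hg : 4 ≤ g) {m : ℕ} (hm : m ∈ Aset g) {k : ℕ} (hk : k < g - 1) :
    pairing (OmSigma g) (evec g m) (uu g k) =
      if m = 3 * k + 2 ∨ m = 3 * k + 3 then 1 else 0 := by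
  rw [uu_eq, pairing_sub, Eval g hm (mem3 g hk), Eval g hm (mem2 g hk)]
  rcases (memA_iff g).mp hm with rfl | rfl | ⟨j, hj, rfl | rfl⟩ <;>
    simp only [pb0, pb1, pb2eq, pb3eq] <;>
    split_ifs <;> first | omega | simp_all

end Lems2
section Lems3
variable (g : ℕ)

lemma P_e_SS_01 (hg : 4 ≤ g) {m : ℕ} (hm : m ∈ Aset g) (hm1 : m ≤ 1) :
    pairing (OmSigma g) (evec g m) (SS g) = 0 := by
  rw [SS, pairing_sum_right]
  refine Finset.sum_eq_zero fun k hk => ?_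
  rw [P_e_uu g hg hm (Finset.mem_range.mp hk)]
  have : ¬(m = 3 * k + 2 ∨ m = 3 * k + 3) := by omega
  simp [this]

lemma P_e_SS_mid (hg : 4 ≤ g) {j : ℕ} (hj : j < g - 1) {m : ℕ}
    (hm : m ∈ Aset g) (hmj : m = 3 * j + 2 ∨ m = 3 * j + 3) :
    pairing (OmSigma g) (evec g m) (SS g) = 1 := by
  rw [SS, pairing_sum_right]
  rw [Finset.sum_eq_single j]
  · rw [P_e_uu g hg hm hj, if_pos hmj]
  · intro k hk hkj
    rw [P_e_uu g hg hm (Finset.mem_range.mp hk)]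
    have : ¬(m = 3 * k + 2 ∨ m = 3 * k + 3) := by omega
    simp [this]
  · intro h
    exact absurd (Finset.mem_range.mpr hj) h

lemma P_uu_uu (hg : 4 ≤ g) {j k : ℕ} (hj : j < g - 1) (hk : k < g - 1) :
    pairing (OmSigma g) (uu g j) (uu g k) = 0 := by
  rw [uu_eq g j, pairing_sub_left,
    P_e_uu g hg (mem3 g hj) hk, P_e_uu g hg (mem2 g hj) hk]
  split_ifs <;> omega

lemma P_uu_SS (hg : 4 ≤ g) {j : ℕ} (hj : j < g - 1) :
    pairing (OmSigma g) (uu g j) (SS g) = 0 := by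
  rw [SS, pairing_sum_right]
  exact Finset.sum_eq_zero fun k hk => P_uu_uu g hg hj (Finset.mem_range.mp hk)

lemma P_vstar_wstar (hg : 4 ≤ g) :
    pairing (OmSigma g) (vstar g) (wstar g) = 1 := by
  rw [vstar_eq, wstar_eq, pairing_add_left, pairing_add, pairing_add]
  have h01 : pairing (OmSigma g) (evec g 0) (evec g 1) = 1 := by
    rw [Eval g (mem0 g) (mem1 g), pb0, pb1, if_pos (by omega)]
  have h0S := P_e_SS_01 g hg (mem0 g) (by norm_num)
  have hS1 : pairing (OmSigma g) (SS g) (evec g 1) = 0 := by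
    rw [pairing_swap g (OmSigma_skew g), P_e_SS_01 g hg (mem1 g) (le_refl 1)]
    norm_num
  have hSS : pairing (OmSigma g) (SS g) (SS g) = 0 :=
    pairing_self_zero _ (OmSigma_skew g) _
  rw [h01, h0S, hS1, hSS]; norm_num

end Lems3
section Lems4
variable (g : ℕ)

lemma pbn2 : pbsigma g 2 = 4 := rfl
lemma pbn3 : pbsigma g 3 = 3 := rfl
lemma pbn5 : pbsigma g 5 = 2 := rfl
lemma pbn6 : pbsigma g 6 = 1 := rfl

lemma memc {c : ℕ} (hg : 4 ≤ g) (hc : c = 2 ∨ c = 3) : c ∈ Aset g :=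
  (memA_iff g).mpr (Or.inr (Or.inr ⟨0, by omega, by omega⟩))

lemma memd {d : ℕ} (hd : d = 0 ∨ d = 1) : d ∈ Aset g :=
  (memA_iff g).mpr (by omega)

lemma f0_eq (m : ℕ) : evec g m - evec g 5 + evec g 6 = evec g m + uu g 1 := by
  have h : uu g 1 = -evec g 5 + evec g 6 := by norm_num [uu]
  rw [h]
  abel

-- diagonal, i = 0
lemma P_diag0 (hg : 4 ≤ g) :
    pairing (OmSigma g) (evec g 2 + uu g 1) (evec g 3 + uu g 1) = 1 := by
  have h1 : (1 : ℕ) < g - 1 := by omega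
  rw [pairing_add_left, pairing_add, pairing_add,
    Eval g (memc g hg (Or.inl rfl)) (memc g hg (Or.inr rfl)),
    P_e_uu g hg (memc g hg (Or.inl rfl)) h1,
    pairing_swap g (OmSigma_skew g) (uu g 1) (evec g 3),
    P_e_uu g hg (memc g hg (Or.inr rfl)) h1,
    pairing_self_zero _ (OmSigma_skew g), pbn2, pbn3]
  split_ifs <;> omega

-- diagonal, middle
lemma P_diag_mid (hg : 4 ≤ g) {i : ℕ} (hi1 : 1 ≤ i) (hi : i < g - 1) :
    pairing (OmSigma g) (evec g (3 * i + 2)) (evec g (3 * i + 3)) = 1 := by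
  rw [Eval g (mem2 g hi) (mem3 g hi)]
  simp only [pb2eq, pb3eq]
  split_ifs <;> omega

-- cross: i = 0 vs middle j
lemma P_f0_e (hg : 4 ≤ g) {c n j : ℕ} (hc : c = 2 ∨ c = 3) (hj1 : 1 ≤ j)
    (hj : j < g - 1) (hn : n = 3 * j + 2 ∨ n = 3 * j + 3) :
    pairing (OmSigma g) (evec g c + uu g 1) (evec g n) = 0 := by
  have hnA : n ∈ Aset g := (memA_iff g).mpr (Or.inr (Or.inr ⟨j, hj, hn⟩))
  rw [pairing_add_left, Eval g (memc g hg hc) hnA,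
    pairing_swap g (OmSigma_skew g), P_e_uu g hg hnA (by omega : 1 < g - 1)]
  obtain rfl | rfl := hn <;> obtain rfl | rfl := hc <;>
    simp only [pb2eq, pb3eq, pbn2, pbn3] <;> split_ifs <;> omega

-- cross: i = 0 vs last
lemma P_f0_vw (hg : 4 ≤ g) {c d : ℕ} (hc : c = 2 ∨ c = 3) (hd : d = 0 ∨ d = 1) :
    pairing (OmSigma g) (evec g c + uu g 1) (evec g d + SS g) = 0 := by
  have h1 : (1 : ℕ) < g - 1 := by omega
  rw [pairing_add_left, pairing_add, pairing_add,
    Eval g (memc g hg hc) (memd g hd),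
    P_e_SS_mid g hg (show 0 < g - 1 by omega) (memc g hg hc) (by omega),
    pairing_swap g (OmSigma_skew g) (uu g 1) (evec g d),
    P_e_uu g hg (memd g hd) h1, P_uu_SS g hg h1]
  obtain rfl | rfl := hc <;> obtain rfl | rfl := hd <;>
    simp only [pbn2, pbn3, pb0, pb1] <;> split_ifs <;> first | omega | (simp_all <;> split_ifs <;> omega)

-- cross: middle vs middle
lemma P_mid_mid (hg : 4 ≤ g) {i j m n : ℕ} (hi1 : 1 ≤ i) (hij : i < j)
    (hj : j < g - 1) (hm : m = 3 * i + 2 ∨ m = 3 * i + 3)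
    (hn : n = 3 * j + 2 ∨ n = 3 * j + 3) :
    pairing (OmSigma g) (evec g m) (evec g n) = 0 := by
  have hmA : m ∈ Aset g := (memA_iff g).mpr (Or.inr (Or.inr ⟨i, by omega, hm⟩))
  have hnA : n ∈ Aset g := (memA_iff g).mpr (Or.inr (Or.inr ⟨j, hj, hn⟩))
  rw [Eval g hmA hnA]
  obtain rfl | rfl := hm <;> obtain rfl | rfl := hn <;>
    simp only [pb2eq, pb3eq] <;> split_ifs <;> omega

-- cross: middle vs last
lemma P_mid_vw (hg : 4 ≤ g) {i m d : ℕ} (hi1 : 1 ≤ i) (hi : i < g - 1)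
    (hm : m = 3 * i + 2 ∨ m = 3 * i + 3) (hd : d = 0 ∨ d = 1) :
    pairing (OmSigma g) (evec g m) (evec g d + SS g) = 0 := by
  have hmA : m ∈ Aset g := (memA_iff g).mpr (Or.inr (Or.inr ⟨i, hi, hm⟩))
  rw [pairing_add, Eval g hmA (memd g hd), P_e_SS_mid g hg hi hmA hm]
  obtain rfl | rfl := hm <;> obtain rfl | rfl := hd <;>
    simp only [pb2eq, pb3eq, pb0, pb1] <;> split_ifs <;> omega

end Lems4
section Lems5
variable (g : ℕ)

lemma fam00 {i : Fin g} (hi : (i : ℕ) = 0) : famsigma g (i, 0) = evec g 2 + uu g 1 := by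
  simp only [famsigma, hi]; norm_num [f0_eq]
lemma fam01 {i : Fin g} (hi : (i : ℕ) = 0) : famsigma g (i, 1) = evec g 3 + uu g 1 := by
  simp only [famsigma, hi]; norm_num [f0_eq]
lemma fam_mid0 {i : Fin g} (hi0 : ¬(i : ℕ) = 0) (hi : (i : ℕ) < g - 1) :
    famsigma g (i, 0) = evec g (3 * (i : ℕ) + 2) := by
  simp only [famsigma, hi0, hi]; norm_num
lemma fam_mid1 {i : Fin g} (hi0 : ¬(i : ℕ) = 0) (hi : (i : ℕ) < g - 1) :
    famsigma g (i, 1) = evec g (3 * (i : ℕ) + 3) := by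
  simp only [famsigma, hi0, hi]; norm_num
lemma fam_last0 {i : Fin g} (hi0 : ¬(i : ℕ) = 0) (hi : ¬(i : ℕ) < g - 1) :
    famsigma g (i, 0) = evec g 0 + SS g := by
  simp only [famsigma, hi0, hi]; norm_num [vstar_eq]
lemma fam_last1 {i : Fin g} (hi0 : ¬(i : ℕ) = 0) (hi : ¬(i : ℕ) < g - 1) :
    famsigma g (i, 1) = evec g 1 + SS g := by
  simp only [famsigma, hi0, hi]; norm_num [wstar_eq]

lemma fin2cases (s : Fin 2) : s = 0 ∨ s = 1 := by
  rcases s with ⟨s, hs⟩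
  have : s = 0 ∨ s = 1 := by omega
  rcases this with rfl | rfl
  · exact Or.inl rfl
  · exact Or.inr rfl

lemma crossLT (hg : 4 ≤ g) (i j : Fin g) (hij : (i : ℕ) < (j : ℕ)) (s t : Fin 2) :
    pairing (OmSigma g) (famsigma g (i, s)) (famsigma g (j, t)) = 0 := by
  have hjg : (j : ℕ) < g := j.isLt
  have hj0 : ¬(j : ℕ) = 0 := by omega
  by_cases hi0 : (i : ℕ) = 0
  · by_cases hj : (j : ℕ) < g - 1
    · rcases fin2cases s with rfl | rfl <;> rcases fin2cases t with rfl | rfl <;>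
        simp only [fam00 g hi0, fam01 g hi0, fam_mid0 g hj0 hj, fam_mid1 g hj0 hj] <;>
        [exact P_f0_e g hg (Or.inl rfl) (by omega) hj (Or.inl rfl);
         exact P_f0_e g hg (Or.inl rfl) (by omega) hj (Or.inr rfl);
         exact P_f0_e g hg (Or.inr rfl) (by omega) hj (Or.inl rfl);
         exact P_f0_e g hg (Or.inr rfl) (by omega) hj (Or.inr rfl)]
    · rcases fin2cases s with rfl | rfl <;> rcases fin2cases t with rfl | rfl <;>
        simp only [fam00 g hi0, fam01 g hi0, fam_last0 g hj0 hj, fam_last1 g hj0 hj] <;>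
        [exact P_f0_vw g hg (Or.inl rfl) (Or.inl rfl);
         exact P_f0_vw g hg (Or.inl rfl) (Or.inr rfl);
         exact P_f0_vw g hg (Or.inr rfl) (Or.inl rfl);
         exact P_f0_vw g hg (Or.inr rfl) (Or.inr rfl)]
  · have hi : (i : ℕ) < g - 1 := by omega
    by_cases hj : (j : ℕ) < g - 1
    · rcases fin2cases s with rfl | rfl <;> rcases fin2cases t with rfl | rfl <;>
        simp only [fam_mid0 g hi0 hi, fam_mid1 g hi0 hi,
          fam_mid0 g hj0 hj, fam_mid1 g hj0 hj] <;>
        [exact P_mid_mid g hg (by omega) hij hj (Or.inl rfl) (Or.inl rfl);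
         exact P_mid_mid g hg (by omega) hij hj (Or.inl rfl) (Or.inr rfl);
         exact P_mid_mid g hg (by omega) hij hj (Or.inr rfl) (Or.inl rfl);
         exact P_mid_mid g hg (by omega) hij hj (Or.inr rfl) (Or.inr rfl)]
    · rcases fin2cases s with rfl | rfl <;> rcases fin2cases t with rfl | rfl <;>
        simp only [fam_mid0 g hi0 hi, fam_mid1 g hi0 hi,
          fam_last0 g hj0 hj, fam_last1 g hj0 hj] <;>
        [exact P_mid_vw g hg (by omega) hi (Or.inl rfl) (Or.inl rfl);
         exact P_mid_vw g hg (by omega) hi (Or.inl rfl) (Or.inr rfl);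
         exact P_mid_vw g hg (by omega) hi (Or.inr rfl) (Or.inl rfl);
         exact P_mid_vw g hg (by omega) hi (Or.inr rfl) (Or.inr rfl)]

lemma thm_diag (hg : 4 ≤ g) (i : Fin g) :
    pairing (OmSigma g) (famsigma g (i, 0)) (famsigma g (i, 1)) = 1 := by
  by_cases hi0 : (i : ℕ) = 0
  · rw [fam00 g hi0, fam01 g hi0]; exact P_diag0 g hg
  · by_cases hi : (i : ℕ) < g - 1
    · rw [fam_mid0 g hi0 hi, fam_mid1 g hi0 hi]; exact P_diag_mid g hg (by omega) hi
    · rw [fam_last0 g hi0 hi, fam_last1 g hi0 hi, ← vstar_eq, ← wstar_eq]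
      exact P_vstar_wstar g hg

lemma thm_cross (hg : 4 ≤ g) (i j : Fin g) (hij : i ≠ j) (s t : Fin 2) :
    pairing (OmSigma g) (famsigma g (i, s)) (famsigma g (j, t)) = 0 := by
  rcases lt_or_gt_of_ne hij with h | h
  · exact crossLT g hg i j h s t
  · rw [pairing_swap g (OmSigma_skew g), crossLT g hg j i h t s, neg_zero]

end Lems5
section Lems6
variable (g : ℕ)

lemma Aset_card (hg : 1 ≤ g) : (Aset g).card = 2 * g := by
  have hdis : Disjoint ({0, 1} : Finset ℕ)
      ((Finset.range (g - 1)).biUnion fun k => {3 * k + 2, 3 * k + 3}) := by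
    simp only [Finset.disjoint_left, Finset.mem_insert, Finset.mem_singleton,
      Finset.mem_biUnion, Finset.mem_range, not_exists]
    rintro a (rfl | rfl) <;> intro k <;> simp
  have hpd : ∀ x ∈ Finset.range (g - 1), ∀ y ∈ Finset.range (g - 1), x ≠ y →
      Disjoint ({3 * x + 2, 3 * x + 3} : Finset ℕ) {3 * y + 2, 3 * y + 3} := by
    intro x _ y _ hxy
    simp only [Finset.disjoint_left, Finset.mem_insert, Finset.mem_singleton]
    rintro a (rfl | rfl) h <;> rcases h with h | h <;> omega
  rw [Aset, Finset.card_union_of_disjoint hdis, Finset.card_biUnion hpd]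
  have : ∀ k ∈ Finset.range (g - 1), ({3 * k + 2, 3 * k + 3} : Finset ℕ).card = 2 := by
    intro k _
    rw [Finset.card_insert_of_notMem (by simp), Finset.card_singleton]
  rw [Finset.sum_congr rfl this, Finset.sum_const, Finset.card_range]
  have : ({0, 1} : Finset ℕ).card = 2 := rfl
  rw [this, smul_eq_mul]
  omega

def Lmap : ((Fin g × Fin 2) → ℤ) →ₗ[ℤ] (Idx g → ℤ) where
  toFun c := ∑ p, c p • famsigma g p
  map_add' c d := by
    simp only [Pi.add_apply, add_smul, Finset.sum_add_distrib]
  map_smul' r c := by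
    simp only [Pi.smul_apply, smul_eq_mul, RingHom.id_apply, Finset.smul_sum]
    exact Finset.sum_congr rfl fun x _ => mul_smul r (c x) (famsigma g x)

lemma Lmap_single (p : Fin g × Fin 2) : Lmap g (Pi.single p 1) = famsigma g p := by
  show (∑ q, Pi.single p 1 q • famsigma g q) = famsigma g p
  rw [Finset.sum_eq_single p]
  · simp
  · intro q _ hq; simp [Pi.single_eq_of_ne hq]
  · simp

lemma evec_mem (hg : 4 ≤ g) {m : ℕ} (hm : m ∈ Aset g) :
    evec g m ∈ LinearMap.range (Lmap g) := by
  set R := LinearMap.range (Lmap g) with hR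
  have hfam : ∀ p, famsigma g p ∈ R := fun p => ⟨Pi.single p 1, Lmap_single g p⟩
  have hmid : ∀ k, 1 ≤ k → k < g - 1 →
      evec g (3 * k + 2) ∈ R ∧ evec g (3 * k + 3) ∈ R := by
    intro k hk1 hk
    have hkg : k < g := by omega
    constructor
    · have := hfam (⟨k, hkg⟩, 0)
      rwa [fam_mid0 g (by simpa using (by omega : k ≠ 0)) (by simpa using hk)] at this
    · have := hfam (⟨k, hkg⟩, 1)
      rwa [fam_mid1 g (by simpa using (by omega : k ≠ 0)) (by simpa using hk)] at this
  have huu1 : uu g 1 ∈ R := by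
    rw [uu_eq]
    exact sub_mem (hmid 1 (le_refl 1) (by omega)).2 (hmid 1 (le_refl 1) (by omega)).1
  have he2 : evec g 2 ∈ R := by
    have h := hfam (⟨0, by omega⟩, 0)
    rw [fam00 g rfl] at h
    have := sub_mem h huu1
    simpa using this
  have he3 : evec g 3 ∈ R := by
    have h := hfam (⟨0, by omega⟩, 1)
    rw [fam01 g rfl] at h
    have := sub_mem h huu1
    simpa using this
  have hall : ∀ k, k < g - 1 → evec g (3 * k + 2) ∈ R ∧ evec g (3 * k + 3) ∈ R := by
    intro k hk
    rcases Nat.eq_zero_or_pos k with rfl | hk1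
    · exact ⟨he2, he3⟩
    · exact hmid k hk1 hk
  have hSS : SS g ∈ R := by
    rw [SS]
    refine Submodule.sum_mem R fun k hk => ?_
    rw [uu_eq]
    exact sub_mem (hall k (Finset.mem_range.mp hk)).2 (hall k (Finset.mem_range.mp hk)).1
  have he0 : evec g 0 ∈ R := by
    have h := hfam (⟨g - 1, by omega⟩, 0)
    rw [fam_last0 g (by simpa using (by omega : g - 1 ≠ 0)) (by simp)] at h
    have := sub_mem h hSS
    simpa using this
  have he1 : evec g 1 ∈ R := by
    have h := hfam (⟨g - 1, by omega⟩, 1)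
    rw [fam_last1 g (by simpa using (by omega : g - 1 ≠ 0)) (by simp)] at h
    have := sub_mem h hSS
    simpa using this
  rcases (memA_iff g).mp hm with rfl | rfl | ⟨j, hj, rfl | rfl⟩
  · exact he0
  · exact he1
  · exact (hall j hj).1
  · exact (hall j hj).2

lemma Lmap_surjective (hg : 4 ≤ g) : Function.Surjective (Lmap g) := by
  rw [← LinearMap.range_eq_top, eq_top_iff]
  intro u _
  have hu : u = ∑ a : Idx g, u a • evec g (a : ℕ) := by
    funext b
    rw [Finset.sum_apply, Finset.sum_eq_single b]
    · simp [evec]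
    · intro a _ hab
      have : (b : ℕ) ≠ (a : ℕ) := fun h => hab (Subtype.ext h.symm)
      simp [evec, this]
    · simp
  rw [hu]
  exact Submodule.sum_mem _ fun a _ => Submodule.smul_mem _ _ (evec_mem g hg a.2)

lemma Lmap_injective (hg : 4 ≤ g) : Function.Injective (Lmap g) := by
  have hcard : Fintype.card (Fin g × Fin 2) = Fintype.card (Idx g) := by
    rw [Fintype.card_prod, Fintype.card_fin, Fintype.card_fin, Fintype.card_coe,
      Aset_card g (by omega)]
    ring
  let e : (Fin g × Fin 2) ≃ Idx g := Fintype.equivOfCardEq hcard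
  let E : (Idx g → ℤ) →ₗ[ℤ] (Idx g → ℤ) :=
    (Lmap g) ∘ₗ (LinearEquiv.funCongrLeft ℤ ℤ e).toLinearMap
  have hEsurj : Function.Surjective E :=
    (Lmap_surjective g hg).comp (LinearEquiv.funCongrLeft ℤ ℤ e).surjective
  have hEinj : Function.Injective E :=
    IsNoetherian.injective_of_surjective_endomorphism E hEsurj
  have : Function.Injective
      ((Lmap g) ∘ (LinearEquiv.funCongrLeft ℤ ℤ e : (Idx g → ℤ) → _)) := hEinj
  intro x y hxy
  have := this (a₁ := (LinearEquiv.funCongrLeft ℤ ℤ e).symm x)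
    (a₂ := (LinearEquiv.funCongrLeft ℤ ℤ e).symm y) (by
      simp only [Function.comp_apply, LinearEquiv.apply_symm_apply]
      exact hxy)
  exact (LinearEquiv.funCongrLeft ℤ ℤ e).symm.injective this

lemma basis_exists (hg : 4 ≤ g) :
    ∃ b : Module.Basis (Fin g × Fin 2) ℤ (Idx g → ℤ), ∀ p, b p = famsigma g p := by
  refine ⟨(Pi.basisFun ℤ (Fin g × Fin 2)).map
    (LinearEquiv.ofBijective (Lmap g) ⟨Lmap_injective g hg, Lmap_surjective g hg⟩), ?_⟩
  intro p
  rw [Module.Basis.map_apply]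
  show Lmap g _ = _
  rw [show ((Pi.basisFun ℤ (Fin g × Fin 2)) p : (Fin g × Fin 2) → ℤ) = Pi.single p 1 from
    funext fun q => by simp [Pi.basisFun_apply]]
  exact Lmap_single g p

end Lems6

/-- Lemma 3.8 of the paper: for `g ≥ 4`, the pair `(e_2 - e_5 + e_6, e_3 - e_5 + e_6)`,
the pairs `(e_{3k+2}, e_{3k+3})` for `1 ≤ k ≤ g-2`, and the pair `(v*, w*)` form a
symplectic basis of `(ℤ^A, ⟨·,·⟩)` for the form of `σ^{(g)}`. -/
theorem statement7 (g : ℕ) (hg : 4 ≤ g) :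
    (∃ b : Module.Basis (Fin g × Fin 2) ℤ (Idx g → ℤ), ∀ p, b p = famsigma g p) ∧
    (∀ i : Fin g, pairing (OmSigma g) (famsigma g (i, 0)) (famsigma g (i, 1)) = 1) ∧
    (∀ i j : Fin g, i ≠ j → ∀ s t : Fin 2,
      pairing (OmSigma g) (famsigma g (i, s)) (famsigma g (j, t)) = 0) := by
  exact ⟨basis_exists g hg, thm_diag g hg, thm_cross g hg⟩
end
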